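/- arXiv:2502.08751 — 2 statements merged into one kernel-verified Lean document; each statement's English description precedes it below -/
import Mathlib

section
/- Suppose an operator N on a normed space satisfies: for all μ in a subspace V, ||F_*ⁿ μ||_{S¹} ≤ R r^m ||F_*^{m+d} μ||_{S¹} + (C+1)||F_*^{m+d} μ||₁ for n = 2m+d with d ∈ {0,1}, together with a uniform bound ||F_*ⁿμ||_{S¹} ≤ R + C + 1 on the unit ball of V, weak contraction ||F_* μ||₁ ≤ ||μ||₁, and convergence to equilibrium ||F_*ⁿ μ||₁ ≤ D β₁ⁿ ||μ||_{S¹} on V with 0 < β₁ < 1, 0 < r < 1. Then there exist U₁ > 0 and λ₀ = max{√β₁, √r} < 1 such that ||F_*ⁿ μ||_{S¹} ≤ λ₀ⁿ U₁ ||μ||_{S¹} for all n ≥ 1 and μ ∈ V. -/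
/-!
Write `n = 2m + d` with `d ∈ {0, 1}`. The Lasota–Yorke inequality bounds `‖Tⁿ μ‖` by
`R rᵐ ‖T^{m+d} μ‖ + (C + 1) N₁(T^{m+d} μ)`. The uniform bound on the unit ball of `V` turns the
first term into `O(rᵐ ‖μ‖)`, and convergence to equilibrium turns the second into
`O(β^{m+d} ‖μ‖)`. Both `r` and `β` are at most `λ₀²`, and `λ₀^{2m} ≤ λ₀ⁿ / λ₀`.
-/

open Real

theorem ContinuousLinearMap.norm_apply_le_of_unit_ball_bound {𝕜 E F : Type*}
    [NontriviallyNormedField 𝕜] [NormedAlgebra ℝ 𝕜] [NormedAddCommGroup E] [NormedSpace 𝕜 E]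
    [NormedAddCommGroup F] [NormedSpace 𝕜 F] (f : E →L[𝕜] F) (V : Submodule 𝕜 E) {M : ℝ}
    (hf : ∀ x ∈ V, ‖x‖ ≤ 1 → ‖f x‖ ≤ M) {x : E} (hx : x ∈ V) : ‖f x‖ ≤ M * ‖x‖ := by
  have hM : 0 ≤ M := by simpa using hf 0 V.zero_mem (by simp)
  have hnorm : ‖f.comp V.subtypeL‖ ≤ M :=
    opNorm_le_of_unit_norm hM fun y hy => hf y y.2 (by simpa using hy.le)
  exact (f.comp V.subtypeL).le_of_opNorm_le hnorm ⟨x, hx⟩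

theorem le_sq_max_sqrt_left {a b : ℝ} (ha : 0 ≤ a) : a ≤ max (√a) (√b) ^ 2 := by
  calc a = √a ^ 2 := (sq_sqrt ha).symm
    _ ≤ max (√a) (√b) ^ 2 := by gcongr; exact le_max_left _ _

theorem le_sq_max_sqrt_right {a b : ℝ} (hb : 0 ≤ b) : b ≤ max (√a) (√b) ^ 2 := by
  simpa only [max_comm] using le_sq_max_sqrt_left (b := a) hb

theorem max_sqrt_lt_one {a b : ℝ} (ha : a < 1) (hb : b < 1) : max (√a) (√b) < 1 :=
  max_lt ((sqrt_lt' one_pos).2 (by rwa [one_pow])) ((sqrt_lt' one_pos).2 (by rwa [one_pow]))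

theorem pow_div_two_le_pow_div {q l : ℝ} (hq : 0 ≤ q) (hql : q ≤ l ^ 2) (hl0 : 0 < l)
    (hl1 : l ≤ 1) (n : ℕ) : q ^ (n / 2) ≤ l ^ n / l := by
  rw [le_div_iff₀ hl0]
  calc q ^ (n / 2) * l ≤ (l ^ 2) ^ (n / 2) * l ^ (n % 2) := by
        gcongr
        calc l ≤ l ^ 1 := (pow_one l).ge
          _ ≤ l ^ (n % 2) := pow_le_pow_of_le_one hl0.le hl1 (by omega)
    _ = l ^ n := by rw [← pow_mul, ← pow_add, Nat.div_add_mod]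

theorem norm_pow_apply_le_of_lasotaYorke {X : Type*} [NormedAddCommGroup X]
    [NormedSpace ℝ X] (T : X →L[ℝ] X) (N1 : X → ℝ) (V : Submodule ℝ X) {R C D S r β : ℝ}
    (hr : 0 ≤ r) (hβ0 : 0 ≤ β) (hβ1 : β ≤ 1) (hR : 0 ≤ R) (hC : 0 ≤ C) (hD : 0 ≤ D)
    (hLY : ∀ (μ : X) (m d : ℕ), d ≤ 1 →
      ‖(T ^ (2 * m + d)) μ‖ ≤ R * r ^ m * ‖(T ^ (m + d)) μ‖ + (C + 1) * N1 ((T ^ (m + d)) μ))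
    (hstrong : ∀ μ ∈ V, ∀ n : ℕ, ‖(T ^ n) μ‖ ≤ S * ‖μ‖)
    (hconv : ∀ μ ∈ V, ∀ n : ℕ, N1 ((T ^ n) μ) ≤ D * β ^ n * ‖μ‖) {μ : X} (hμ : μ ∈ V)
    (n : ℕ) : ‖(T ^ n) μ‖ ≤ (R * S * r ^ (n / 2) + (C + 1) * D * β ^ (n / 2)) * ‖μ‖ := by
  set m := n / 2
  set d := n % 2
  have hβ : β ^ (m + d) ≤ β ^ m := pow_le_pow_of_le_one hβ0 hβ1 (Nat.le_add_right m d)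
  calc ‖(T ^ n) μ‖ ≤ R * r ^ m * ‖(T ^ (m + d)) μ‖ + (C + 1) * N1 ((T ^ (m + d)) μ) := by
        simpa only [m, d, Nat.div_add_mod] using hLY μ m d (by omega)
    _ ≤ R * r ^ m * (S * ‖μ‖) + (C + 1) * (D * β ^ m * ‖μ‖) := by
        gcongr
        exacts [hstrong μ hμ _, (hconv μ hμ _).trans (by gcongr)]
    _ = (R * S * r ^ m + (C + 1) * D * β ^ m) * ‖μ‖ := by ring

theorem stmt12_general {X : Type*} [NormedAddCommGroup X] [NormedSpace ℝ X]
    (T : X →L[ℝ] X) (N1 : X → ℝ) (V : Submodule ℝ X)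
    (R C D r β : ℝ) (hr0 : 0 < r) (hr1 : r < 1) (hβ0 : 0 < β) (hβ1 : β < 1)
    (hR : 0 ≤ R) (hC : 0 ≤ C) (hD : 0 ≤ D)
    (hLY : ∀ (μ : X) (m d : ℕ), d ≤ 1 →
      ‖(T ^ (2 * m + d)) μ‖ ≤ R * r ^ m * ‖(T ^ (m + d)) μ‖ + (C + 1) * N1 ((T ^ (m + d)) μ))
    (hUnif : ∀ μ ∈ V, ‖μ‖ ≤ 1 → ∀ n : ℕ, ‖(T ^ n) μ‖ ≤ R + C + 1)
    (hconv : ∀ μ ∈ V, ∀ n : ℕ, N1 ((T ^ n) μ) ≤ D * β ^ n * ‖μ‖) :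
    ∃ U₁ > 0, ∀ μ ∈ V, ∀ n : ℕ, 1 ≤ n →
      ‖(T ^ n) μ‖ ≤ (max (Real.sqrt β) (Real.sqrt r)) ^ n * U₁ * ‖μ‖ := by
  set l := max (√β) (√r)
  have hl0 : 0 < l := (sqrt_pos.2 hβ0).trans_le (le_max_left _ _)
  have hl1 : l ≤ 1 := (max_sqrt_lt_one hβ1 hr1).le
  have hβl : β ≤ l ^ 2 := le_sq_max_sqrt_left hβ0.le
  have hrl : r ≤ l ^ 2 := le_sq_max_sqrt_right hr0.le
  have hstrong : ∀ μ ∈ V, ∀ n : ℕ, ‖(T ^ n) μ‖ ≤ (R + C + 1) * ‖μ‖ := fun μ hμ n =>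
    (T ^ n).norm_apply_le_of_unit_ball_bound V (fun ν hν h1 => hUnif ν hν h1 n) hμ
  set K := R * (R + C + 1) + (C + 1) * D
  refine ⟨(K + 1) / l, by positivity, fun μ hμ n _ => ?_⟩
  calc ‖(T ^ n) μ‖
      ≤ (R * (R + C + 1) * r ^ (n / 2) + (C + 1) * D * β ^ (n / 2)) * ‖μ‖ :=
        norm_pow_apply_le_of_lasotaYorke T N1 V hr0.le hβ0.le hβ1.le hR hC hD hLY hstrong hconv
          hμ n
    _ ≤ (R * (R + C + 1) * (l ^ n / l) + (C + 1) * D * (l ^ n / l)) * ‖μ‖ := by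
        gcongr
        exacts [pow_div_two_le_pow_div hr0.le hrl hl0 hl1 n,
          pow_div_two_le_pow_div hβ0.le hβl hl0 hl1 n]
    _ = l ^ n * (K / l) * ‖μ‖ := by ring
    _ ≤ l ^ n * ((K + 1) / l) * ‖μ‖ := by gcongr; linarith

/-- Abstract combination step for the spectral gap: a Lasota–Yorke inequality in the strong
norm, a uniform bound on the unit ball of `V`, weak contraction, and exponential convergence
to equilibrium in the weak norm on `V` yield exponential decay in the strong norm on `V`,
with rate `λ₀ = max{√β, √r}`. -/
theorem stmt12 {X : Type*} [NormedAddCommGroup X] [NormedSpace ℝ X]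
    (T : X →L[ℝ] X) (N1 : X → ℝ) (V : Submodule ℝ X)
    (R C D r β : ℝ) (hr0 : 0 < r) (hr1 : r < 1) (hβ0 : 0 < β) (hβ1 : β < 1)
    (hR : 0 ≤ R) (hC : 0 ≤ C) (hD : 0 ≤ D)
    (hVinv : ∀ μ ∈ V, T μ ∈ V)
    (hLY : ∀ (μ : X) (m d : ℕ), d ≤ 1 →
      ‖(T ^ (2 * m + d)) μ‖ ≤ R * r ^ m * ‖(T ^ (m + d)) μ‖ + (C + 1) * N1 ((T ^ (m + d)) μ))
    (hUnif : ∀ μ ∈ V, ‖μ‖ ≤ 1 → ∀ n : ℕ, ‖(T ^ n) μ‖ ≤ R + C + 1)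
    (hweak : ∀ μ : X, N1 (T μ) ≤ N1 μ)
    (hconv : ∀ μ ∈ V, ∀ n : ℕ, N1 ((T ^ n) μ) ≤ D * β ^ n * ‖μ‖) :
    ∃ U₁ > 0, ∀ μ ∈ V, ∀ n : ℕ, 1 ≤ n →
      ‖(T ^ n) μ‖ ≤ (max (Real.sqrt β) (Real.sqrt r)) ^ n * U₁ * ‖μ‖ :=
  stmt12_general T N1 V R C D r β hr0 hr1 hβ0 hβ1 hR hC hD hLY hUnif hconv
end

section
/- Let K be a compact metric space of diameter 1, μ₁, μ₂ finite positive measures on K and F₁, F₂ : K → K maps such that F₁ is an α-contraction and d(F₁(z), F₂(z)) ≤ δ for all z. Then for the Wasserstein-like norm, ||F₁_* μ − F₂_* μ||_W ≤ δ ||μ||_W for any positive measure μ, and consequently ||F₁_* μ₁ − F₂_* μ₂||_W ≤ α ||μ₁ − μ₂||_W + δ ||μ₂||_W when (μ₁ − μ₂)(K) = 0. -/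
open MeasureTheory

/-- Wasserstein–Kantorovich-like norm of a positive measure. -/
noncomputable def mWnorm {K : Type*} [MeasurableSpace K] [MetricSpace K]
    (μ : MeasureTheory.Measure K) : ℝ :=
  sSup {r | ∃ h : K → ℝ, (∀ x y, |h x - h y| ≤ dist x y) ∧ (∀ x, |h x| ≤ 1) ∧
    r = |∫ x, h x ∂μ|}

/-- Wasserstein–Kantorovich-like distance between two positive measures, i.e. the `W`-norm of
their difference as signed measures. -/
noncomputable def Wdist {K : Type*} [MeasurableSpace K] [MetricSpace K]
    (μ ν : MeasureTheory.Measure K) : ℝ :=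
  sSup {r | ∃ h : K → ℝ, (∀ x y, |h x - h y| ≤ dist x y) ∧ (∀ x, |h x| ≤ 1) ∧
    r = |(∫ x, h x ∂μ) - ∫ x, h x ∂ν|}

/-! A test function `h` (1-Lipschitz, `|h| ≤ 1`) integrates to at most `μ(K)` in absolute value,
so both suprema are finite and `μ(K) ≤ ‖μ‖_W` (test against `1`). Composing a test function with
`F₁` and `F₂` changes it by at most `δ` pointwise, which gives the first estimate. For the second,
`h ∘ F₁` is `α`-Lipschitz, hence within `α` of the constant `h (F₁ z₀)` on a space of diameter
`1`; as `μ₁` and `μ₂` have the same mass the constant integrates away, and what is left is `α`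
times a test function. Since `Metric.diam` is `0` on unbounded sets, `diam K = 1` also makes `K`
bounded. -/

theorem dist_le_diam_univ_of_diam_ne_zero {X : Type*} [PseudoMetricSpace X]
    (hd : Metric.diam (Set.univ : Set X) ≠ 0) (x y : X) :
    dist x y ≤ Metric.diam (Set.univ : Set X) :=
  Metric.dist_le_diam_of_mem (not_imp_comm.mp Metric.diam_eq_zero_of_unbounded hd)
    (Set.mem_univ x) (Set.mem_univ y)

theorem continuous_of_abs_sub_le_dist {X : Type*} [PseudoMetricSpace X] {h : X → ℝ}
    (hl : ∀ x y, |h x - h y| ≤ dist x y) : Continuous h :=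
  (LipschitzWith.of_dist_le' (K := 1) fun x y => by simpa [Real.dist_eq] using hl x y).continuous

theorem abs_integral_le_mul_measureReal {X : Type*} [MeasurableSpace X] (μ : Measure X)
    [IsFiniteMeasure μ] {f : X → ℝ} {C : ℝ} (hb : ∀ x, |f x| ≤ C) :
    |∫ x, f x ∂μ| ≤ C * μ.real Set.univ :=
  norm_integral_le_of_norm_le_const (μ := μ) (f := f) (C := C) (.of_forall hb)

theorem integrable_of_abs_le {X : Type*} [TopologicalSpace X] [MeasurableSpace X]
    [OpensMeasurableSpace X] (μ : Measure X) [IsFiniteMeasure μ] {f : X → ℝ} (hc : Continuous f)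
    {C : ℝ} (hb : ∀ x, |f x| ≤ C) : Integrable f μ :=
  .of_bound hc.aestronglyMeasurable C (.of_forall hb)

section TestFunctions

variable {K : Type*} [MetricSpace K] [MeasurableSpace K]

theorem mWnorm_nonneg (μ : Measure K) : 0 ≤ mWnorm μ :=
  Real.sSup_nonneg fun _ ⟨_, _, _, hr⟩ => hr ▸ abs_nonneg _

theorem Wdist_nonneg (μ ν : Measure K) : 0 ≤ Wdist μ ν :=
  Real.sSup_nonneg fun _ ⟨_, _, _, hr⟩ => hr ▸ abs_nonneg _

theorem measureReal_univ_le_mWnorm (μ : Measure K) [IsFiniteMeasure μ] :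
    μ.real Set.univ ≤ mWnorm μ := by
  refine le_csSup ⟨μ.real Set.univ, ?_⟩
    ⟨fun _ => 1, by simp, by simp, by simp [abs_of_nonneg measureReal_nonneg]⟩
  rintro r ⟨h, -, hb, rfl⟩
  simpa using abs_integral_le_mul_measureReal μ hb

theorem abs_integral_sub_le_Wdist (μ ν : Measure K) [IsFiniteMeasure μ] [IsFiniteMeasure ν]
    {h : K → ℝ} (hl : ∀ x y, |h x - h y| ≤ dist x y) (hb : ∀ x, |h x| ≤ 1) :
    |(∫ x, h x ∂μ) - ∫ x, h x ∂ν| ≤ Wdist μ ν := by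
  refine le_csSup ⟨μ.real Set.univ + ν.real Set.univ, ?_⟩ ⟨h, hl, hb, rfl⟩
  rintro r ⟨g, -, hg, rfl⟩
  calc |(∫ x, g x ∂μ) - ∫ x, g x ∂ν| ≤ |∫ x, g x ∂μ| + |∫ x, g x ∂ν| := abs_sub _ _
    _ ≤ μ.real Set.univ + ν.real Set.univ := by
      simpa using add_le_add (abs_integral_le_mul_measureReal μ hg)
        (abs_integral_le_mul_measureReal ν hg)

theorem abs_integral_sub_le_mul_Wdist [OpensMeasurableSpace K] (μ ν : Measure K)
    [IsFiniteMeasure μ] [IsFiniteMeasure ν] {α : ℝ} (hα : 0 ≤ α) {ψ : K → ℝ}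
    (hl : ∀ x y, |ψ x - ψ y| ≤ α * dist x y) (hb : ∀ x, |ψ x| ≤ α) :
    |(∫ x, ψ x ∂μ) - ∫ x, ψ x ∂ν| ≤ α * Wdist μ ν := by
  rcases hα.eq_or_lt with rfl | hα
  · have hψ : ψ = 0 := funext fun x => abs_nonpos_iff.mp (hb x)
    simp [hψ]
  have hgl : ∀ x y, |ψ x / α - ψ y / α| ≤ dist x y := fun x y => by
    rw [← sub_div, abs_div, abs_of_pos hα, div_le_iff₀ hα, mul_comm]
    exact hl x y
  have hgb : ∀ x, |ψ x / α| ≤ 1 := fun x => by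
    rw [abs_div, abs_of_pos hα, div_le_one hα]
    exact hb x
  have key := abs_integral_sub_le_Wdist μ ν hgl hgb
  rwa [integral_div, integral_div, ← sub_div, abs_div, abs_of_pos hα, div_le_iff₀ hα,
    mul_comm] at key

end TestFunctions

section Pushforward

variable {K : Type*} [MetricSpace K] [MeasurableSpace K] [BorelSpace K]

theorem abs_integral_comp_sub_comp_le (μ : Measure K) [IsFiniteMeasure μ] {F₁ F₂ : K → K}
    (hF₁m : Measurable F₁) (hF₂m : Measurable F₂) {δ : ℝ} (hclose : ∀ z, dist (F₁ z) (F₂ z) ≤ δ)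
    {h : K → ℝ} (hl : ∀ x y, |h x - h y| ≤ dist x y) (hb : ∀ x, |h x| ≤ 1) :
    |(∫ x, h (F₁ x) ∂μ) - ∫ x, h (F₂ x) ∂μ| ≤ δ * μ.real Set.univ := by
  have hc := continuous_of_abs_sub_le_dist hl
  have hi₁ : Integrable (fun x => h (F₁ x)) μ :=
    (integrable_of_abs_le (μ.map F₁) hc hb).comp_measurable hF₁m
  have hi₂ : Integrable (fun x => h (F₂ x)) μ :=
    (integrable_of_abs_le (μ.map F₂) hc hb).comp_measurable hF₂m
  rw [← integral_sub hi₁ hi₂]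
  exact abs_integral_le_mul_measureReal μ fun x => (hl _ _).trans (hclose x)

theorem Wdist_map_map_le (μ : Measure K) [IsFiniteMeasure μ] {F₁ F₂ : K → K}
    (hF₁m : Measurable F₁) (hF₂m : Measurable F₂) {δ : ℝ} (hδ : 0 ≤ δ)
    (hclose : ∀ z, dist (F₁ z) (F₂ z) ≤ δ) :
    Wdist (μ.map F₁) (μ.map F₂) ≤ δ * mWnorm μ := by
  refine Real.sSup_le ?_ (mul_nonneg hδ (mWnorm_nonneg μ))
  rintro r ⟨h, hl, hb, rfl⟩
  have hc := continuous_of_abs_sub_le_dist hl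
  rw [integral_map hF₁m.aemeasurable hc.aestronglyMeasurable,
    integral_map hF₂m.aemeasurable hc.aestronglyMeasurable]
  exact (abs_integral_comp_sub_comp_le μ hF₁m hF₂m hclose hl hb).trans
    (mul_le_mul_of_nonneg_left (measureReal_univ_le_mWnorm μ) hδ)

theorem abs_integral_comp_sub_le_mul_Wdist [Nonempty K] (hdist : ∀ x y : K, dist x y ≤ 1)
    (μ ν : Measure K) [IsFiniteMeasure μ] [IsFiniteMeasure ν]
    (hmass : μ.real Set.univ = ν.real Set.univ) {α : ℝ} (hα : 0 ≤ α) {F : K → K}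
    (hF : ∀ x y, dist (F x) (F y) ≤ α * dist x y)
    {h : K → ℝ} (hl : ∀ x y, |h x - h y| ≤ dist x y) (hb : ∀ x, |h x| ≤ 1) :
    |(∫ x, h (F x) ∂μ) - ∫ x, h (F x) ∂ν| ≤ α * Wdist μ ν := by
  obtain ⟨z₀⟩ := ‹Nonempty K›
  set c := h (F z₀)
  have hψl : ∀ x y, |(h (F x) - c) - (h (F y) - c)| ≤ α * dist x y := fun x y => by
    rw [sub_sub_sub_cancel_right]
    exact (hl _ _).trans (hF x y)
  have hψb : ∀ x, |h (F x) - c| ≤ α := fun x =>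
    calc |h (F x) - c| ≤ α * dist x z₀ := (hl _ _).trans (hF x z₀)
      _ ≤ α := mul_le_of_le_one_right hα (hdist x z₀)
  have hhF : Continuous fun x => h (F x) :=
    (continuous_of_abs_sub_le_dist hl).comp (LipschitzWith.of_dist_le' hF).continuous
  have key := abs_integral_sub_le_mul_Wdist μ ν hα hψl hψb
  rwa [integral_sub (integrable_of_abs_le μ hhF fun x => hb _) (integrable_const c),
    integral_sub (integrable_of_abs_le ν hhF fun x => hb _) (integrable_const c),
    integral_const, integral_const, hmass, sub_sub_sub_cancel_right] at key

theorem Wdist_map_map_le_add [Nonempty K] (hdist : ∀ x y : K, dist x y ≤ 1) (μ ν : Measure K)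
    [IsFiniteMeasure μ] [IsFiniteMeasure ν] (hmass : μ Set.univ = ν Set.univ) {α δ : ℝ}
    (hα : 0 ≤ α) (hδ : 0 ≤ δ) {F₁ F₂ : K → K} (hF₁m : Measurable F₁) (hF₂m : Measurable F₂)
    (hF₁ : ∀ x y, dist (F₁ x) (F₁ y) ≤ α * dist x y) (hclose : ∀ z, dist (F₁ z) (F₂ z) ≤ δ) :
    Wdist (μ.map F₁) (ν.map F₂) ≤ α * Wdist μ ν + δ * mWnorm ν := by
  refine Real.sSup_le ?_ (by have := Wdist_nonneg μ ν; have := mWnorm_nonneg ν; positivity)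
  rintro r ⟨h, hl, hb, rfl⟩
  have hc := continuous_of_abs_sub_le_dist hl
  rw [integral_map hF₁m.aemeasurable hc.aestronglyMeasurable,
    integral_map hF₂m.aemeasurable hc.aestronglyMeasurable]
  calc |(∫ x, h (F₁ x) ∂μ) - ∫ x, h (F₂ x) ∂ν|
      ≤ |(∫ x, h (F₁ x) ∂μ) - ∫ x, h (F₁ x) ∂ν| + |(∫ x, h (F₁ x) ∂ν) - ∫ x, h (F₂ x) ∂ν| :=
        abs_sub_le _ _ _
    _ ≤ α * Wdist μ ν + δ * mWnorm ν := add_le_add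
        (abs_integral_comp_sub_le_mul_Wdist hdist μ ν (congrArg ENNReal.toReal hmass) hα hF₁ hl hb)
        ((abs_integral_comp_sub_comp_le ν hF₁m hF₂m hclose hl hb).trans
          (mul_le_mul_of_nonneg_left (measureReal_univ_le_mWnorm ν) hδ))

end Pushforward

theorem stmt17_general {K : Type*} [MetricSpace K] [MeasurableSpace K] [BorelSpace K]
    (hdiam : Metric.diam (Set.univ : Set K) = 1)
    (α δ : ℝ) (hα0 : 0 ≤ α) (hδ : 0 ≤ δ)
    (F₁ F₂ : K → K) (hF₁m : Measurable F₁) (hF₂m : Measurable F₂)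
    (hF₁ : ∀ x y, dist (F₁ x) (F₁ y) ≤ α * dist x y)
    (hclose : ∀ z, dist (F₁ z) (F₂ z) ≤ δ)
    (μ₁ μ₂ : MeasureTheory.Measure K) [IsFiniteMeasure μ₁] [IsFiniteMeasure μ₂] :
    (∀ μ : MeasureTheory.Measure K, IsFiniteMeasure μ →
      Wdist (μ.map F₁) (μ.map F₂) ≤ δ * mWnorm μ) ∧
    (μ₁ Set.univ = μ₂ Set.univ →
      Wdist (μ₁.map F₁) (μ₂.map F₂) ≤ α * Wdist μ₁ μ₂ + δ * mWnorm μ₂) := by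
  have hdist : ∀ x y : K, dist x y ≤ 1 := fun x y =>
    hdiam ▸ dist_le_diam_univ_of_diam_ne_zero (by simp [hdiam]) x y
  have : Nonempty K := by
    by_contra hK
    simp [Set.univ_eq_empty_iff.mpr (not_nonempty_iff.mp hK)] at hdiam
  exact ⟨fun μ _ => Wdist_map_map_le μ hF₁m hF₂m hδ hclose,
    fun hmass => Wdist_map_map_le_add hdist μ₁ μ₂ hmass hα0 hδ hF₁m hF₂m hF₁ hclose⟩

/-- If `F₁` is an `α`-contraction and `d(F₁ z, F₂ z) ≤ δ` for all `z`, then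
`‖F₁_* μ − F₂_* μ‖_W ≤ δ ‖μ‖_W` for any positive measure `μ`, and consequently
`‖F₁_* μ₁ − F₂_* μ₂‖_W ≤ α ‖μ₁ − μ₂‖_W + δ ‖μ₂‖_W` whenever `(μ₁ − μ₂)(K) = 0`. -/
theorem stmt17 {K : Type*} [MetricSpace K] [CompactSpace K] [MeasurableSpace K] [BorelSpace K]
    (hdiam : Metric.diam (Set.univ : Set K) = 1)
    (α δ : ℝ) (hα0 : 0 ≤ α) (hα1 : α < 1) (hδ : 0 ≤ δ)
    (F₁ F₂ : K → K) (hF₁m : Measurable F₁) (hF₂m : Measurable F₂)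
    (hF₁ : ∀ x y, dist (F₁ x) (F₁ y) ≤ α * dist x y)
    (hclose : ∀ z, dist (F₁ z) (F₂ z) ≤ δ)
    (μ₁ μ₂ : MeasureTheory.Measure K) [IsFiniteMeasure μ₁] [IsFiniteMeasure μ₂] :
    (∀ μ : MeasureTheory.Measure K, IsFiniteMeasure μ →
      Wdist (μ.map F₁) (μ.map F₂) ≤ δ * mWnorm μ) ∧
    (μ₁ Set.univ = μ₂ Set.univ →
      Wdist (μ₁.map F₁) (μ₂.map F₂) ≤ α * Wdist μ₁ μ₂ + δ * mWnorm μ₂) :=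
  stmt17_general hdiam α δ hα0 hδ F₁ F₂ hF₁m hF₂m hF₁ hclose μ₁ μ₂
end
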